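/- arXiv:2002.11876 — 5 statements merged into one kernel-verified Lean document; each statement's English description precedes it below -/
import Mathlib

section
/- Let ρ̄ be a probability density on [0,1] with ρ̄(x) ≤ C x^{-(1-a)/2} for all 0 < x < 1, where 0 ≤ a < 1 and C > 0. Define 0 = x̄₀ < x̄₁ < ... < x̄ₙ = 1 by ∫_{x̄_{i-1}}^{x̄_i} ρ̄ = 1/n. Then there is a constant c > 0 (depending only on C and a) such that x̄_i ≥ c (i/n)^{2/(1+a)} for all i = 0, ..., ⌊n/2⌋. -/
open MeasureTheory intervalIntegral

theorem stmt3 (a C : ℝ) (ha0 : 0 ≤ a) (ha1 : a < 1) (hC : 0 < C) :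
    ∃ c > 0, ∀ n : ℕ, 1 ≤ n → ∀ ρ : ℝ → ℝ, ∀ xb : ℕ → ℝ,
      (∀ x, 0 ≤ ρ x) →
      (∀ x ∈ Set.Ioo (0:ℝ) 1, ρ x ≤ C * x ^ (-(1-a)/2)) →
      xb 0 = 0 → xb n = 1 →
      (∀ i j, i < j → j ≤ n → xb i < xb j) →
      (∀ i, 1 ≤ i → i ≤ n → ∫ x in (xb (i-1))..(xb i), ρ x = 1/(n:ℝ)) →
      ∀ i ≤ n/2, xb i ≥ c * ((i:ℝ)/n) ^ (2/(1+a)) := by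
  have ha : (0:ℝ) < 1 + a := by linarith
  have hq : (0:ℝ) < 2/(1+a) := by positivity
  refine ⟨((1+a)/(2*C)) ^ (2/(1+a)), Real.rpow_pos_of_pos (by positivity) _, ?_⟩
  intro n hn ρ xb hρ0 hρb hx0 hxn hmono hint i hi
  rcases Nat.eq_zero_or_pos i with hi0 | hi1
  · subst hi0
    simp [hx0, Real.zero_rpow hq.ne']
  have hin : i < n := lt_of_le_of_lt hi (Nat.div_lt_self (by omega) (by omega))
  -- integrability of each piece
  have hInt : ∀ j, 1 ≤ j → j ≤ n → IntervalIntegrable ρ volume (xb (j-1)) (xb j) := by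
    intro j h1 h2
    by_contra h
    have h0 := intervalIntegral.integral_undef h
    rw [hint j h1 h2] at h0
    have : (0:ℝ) < 1/(n:ℝ) := by positivity
    linarith
  -- telescoping
  have htel : ∀ j, j ≤ n → IntervalIntegrable ρ volume (xb 0) (xb j) ∧
      (∫ x in (xb 0)..(xb j), ρ x) = j/(n:ℝ) := by
    intro j
    induction j with
    | zero => intro _; simp
    | succ k ih =>
      intro hk
      obtain ⟨ih1, ih2⟩ := ih (by omega)
      have hp := hInt (k+1) (by omega) hk
      simp only [Nat.add_sub_cancel] at hp
      have hv := hint (k+1) (by omega) hk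
      simp only [Nat.add_sub_cancel] at hv
      refine ⟨ih1.trans hp, ?_⟩
      rw [← intervalIntegral.integral_add_adjacent_intervals ih1 hp, ih2, hv]
      push_cast
      field_simp
  obtain ⟨hII, hIv⟩ := htel i hin.le
  rw [hx0] at hII hIv
  set t := xb i with ht
  have ht0 : 0 < t := by
    have := hmono 0 i hi1 hin.le
    rwa [hx0] at this
  have ht1 : t < 1 := by
    have := hmono i n hin le_rfl
    rwa [hxn] at this
  set r : ℝ := -(1-a)/2 with hr
  have hrgt : (-1:ℝ) < r := by rw [hr]; linarith
  have hr1 : r + 1 = (1+a)/2 := by rw [hr]; ring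
  -- integral comparison on Ioc 0 t
  have hb : IntervalIntegrable (fun x => C * x ^ r) volume 0 t :=
    (intervalIntegrable_rpow' hrgt).const_mul C
  have hle : (i:ℝ)/n ≤ ∫ x in (0:ℝ)..t, C * x ^ r := by
    rw [← hIv, intervalIntegral.integral_of_le ht0.le,
        intervalIntegral.integral_of_le ht0.le]
    refine setIntegral_mono_on hII.1 hb.1 measurableSet_Ioc ?_
    intro x hx
    exact hρb x ⟨hx.1, lt_of_le_of_lt hx.2 ht1⟩
  have hcalc : (∫ x in (0:ℝ)..t, C * x ^ r) = C * (t ^ ((1+a)/2) / ((1+a)/2)) := by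
    rw [intervalIntegral.integral_const_mul, integral_rpow (Or.inl hrgt), hr1,
        Real.zero_rpow (by positivity : ((1+a)/2 : ℝ) ≠ 0)]
    ring
  rw [hcalc] at hle
  -- solve for t
  have hp2 : (0:ℝ) < (1+a)/2 := by positivity
  have htp : (1+a)/(2*C) * ((i:ℝ)/n) ≤ t ^ ((1+a)/2) := by
    rw [div_mul_eq_mul_div, div_le_iff₀ (by positivity)]
    calc (1+a) * ((i:ℝ)/n) ≤ (1+a) * (C * (t ^ ((1+a)/2) / ((1+a)/2))) := by
          apply mul_le_mul_of_nonneg_left hle (by positivity)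
      _ = t ^ ((1+a)/2) * (2*C) := by field_simp
  have hBnn : (0:ℝ) ≤ (1+a)/(2*C) * ((i:ℝ)/n) := by positivity
  have key : ((1+a)/(2*C) * ((i:ℝ)/n)) ^ (2/(1+a)) ≤ t := by
    calc ((1+a)/(2*C) * ((i:ℝ)/n)) ^ (2/(1+a))
        ≤ (t ^ ((1+a)/2)) ^ (2/(1+a)) := Real.rpow_le_rpow hBnn htp hq.le
      _ = t ^ ((1+a)/2 * (2/(1+a))) := by rw [← Real.rpow_mul ht0.le]
      _ = t := by
          rw [show (1+a)/2 * (2/(1+a)) = 1 by field_simp, Real.rpow_one]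
  calc t ≥ ((1+a)/(2*C) * ((i:ℝ)/n)) ^ (2/(1+a)) := key
    _ = ((1+a)/(2*C)) ^ (2/(1+a)) * ((i:ℝ)/n) ^ (2/(1+a)) :=
        Real.mul_rpow (by positivity) (by positivity)
end

section
/- Let ρ̄ be a probability density on [0,1] with ρ̄(x) ≤ C x^{-(1-a)/2} for 0 < x < 1, 0 ≤ a < 1, and let x̄_i be the quantiles of ρ̄ at levels i/n, with ℓ̄_i := x̄_i - x̄_{i-1}. Then there is a constant c > 0 such that ℓ̄₁ ≥ c n^{-2/(1+a)} and ℓ̄_i ≥ (c/n)((i-1)/n)^{(1-a)/(1+a)} for all i = 2, ..., ⌊n/2⌋. -/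
open MeasureTheory intervalIntegral Real

/-- Convexity (Bernoulli) consequence: for `q ≥ 1` and `0 < t ≤ s`,
`q * t^(q-1) * (s - t) ≤ s^q - t^q`. -/
lemma stmt4_bern {q t s : ℝ} (hq : 1 ≤ q) (ht : 0 < t) (hts : t ≤ s) :
    q * t ^ (q - 1) * (s - t) ≤ s ^ q - t ^ q := by
  have hx : (-1:ℝ) ≤ s / t - 1 := by
    have h0 : 0 ≤ s / t := div_nonneg (ht.le.trans hts) ht.le
    linarith
  have h := one_add_mul_self_le_rpow_one_add hx hq
  rw [show (1:ℝ) + (s / t - 1) = s / t by ring,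
      Real.div_rpow (ht.le.trans hts) ht.le] at h
  have htq : (0:ℝ) < t ^ q := Real.rpow_pos_of_pos ht q
  have h3 : (1 + q * (s / t - 1)) * t ^ q ≤ s ^ q := by
    rw [← le_div_iff₀ htq]; exact h
  have h4 : t ^ (q - 1) = t ^ q / t := by
    rw [Real.rpow_sub ht, Real.rpow_one]
  have h5 : (1 + q * (s / t - 1)) * t ^ q = t ^ q + q * (t ^ (q-1) * (s - t)) := by
    rw [h4]; field_simp
  nlinarith [h3, h5]

theorem stmt4 (a C : ℝ) (ha0 : 0 ≤ a) (ha1 : a < 1) (hC : 0 < C) :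
    ∃ c > 0, ∀ n : ℕ, 1 ≤ n → ∀ ρ : ℝ → ℝ, ∀ xb : ℕ → ℝ,
      (∀ x, 0 ≤ ρ x) →
      (∀ x ∈ Set.Ioo (0:ℝ) 1, ρ x ≤ C * x ^ (-(1-a)/2)) →
      xb 0 = 0 → xb n = 1 →
      (∀ i j, i < j → j ≤ n → xb i < xb j) →
      (∀ i, 1 ≤ i → i ≤ n → ∫ x in (xb (i-1))..(xb i), ρ x = 1/(n:ℝ)) →
      (xb 1 - xb 0 ≥ c * (n:ℝ) ^ (-2/(1+a)) ∧
       ∀ i, 2 ≤ i → i ≤ n/2 →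
         xb i - xb (i-1) ≥ (c/n) * (((i:ℝ)-1)/n) ^ ((1-a)/(1+a))) := by
  have ha1' : (0:ℝ) < 1 + a := by linarith
  obtain ⟨p, hpdef⟩ : ∃ t : ℝ, t = (1 + a) / 2 := ⟨_, rfl⟩
  obtain ⟨q, hqdef⟩ : ∃ t : ℝ, t = 2 / (1 + a) := ⟨_, rfl⟩
  obtain ⟨r, hrdef⟩ : ∃ t : ℝ, t = -(1 - a) / 2 := ⟨_, rfl⟩
  have hp0 : 0 < p := by rw [hpdef]; linarith
  have hp1 : p ≤ 1 := by rw [hpdef]; linarith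
  have hq1 : 1 ≤ q := by
    rw [hqdef, le_div_iff₀ ha1']; linarith
  have hpq : p * q = 1 := by
    rw [hpdef, hqdef]; field_simp
  have hr1 : (-1:ℝ) < r := by rw [hrdef]; linarith
  have hrp : r + 1 = p := by rw [hrdef, hpdef]; ring
  obtain ⟨β, hβdef⟩ : ∃ t : ℝ, t = (1 - a) / (1 + a) := ⟨_, rfl⟩
  have hβ : β = q * (1 - p) := by
    rw [hβdef, hqdef, hpdef]; field_simp; ring
  refine ⟨min ((p / C) ^ q) ((p / C) ^ β / C), ?_, ?_⟩
  · apply lt_min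
    · exact Real.rpow_pos_of_pos (div_pos hp0 hC) q
    · exact div_pos (Real.rpow_pos_of_pos (div_pos hp0 hC) β) hC
  intro n hn ρ xb hρ0 hρle' hx0 hxn hmono hint
  have hρle : ∀ x ∈ Set.Ioo (0:ℝ) 1, ρ x ≤ C * x ^ r := by
    intro x hx; rw [hrdef]; exact hρle' x hx
  have hn0 : (0:ℝ) < (n:ℝ) := by exact_mod_cast hn
  -- basic bounds on xb
  have hnonneg : ∀ j, j ≤ n → 0 ≤ xb j := by
    intro j hj
    rcases Nat.eq_zero_or_pos j with h0 | h0
    · rw [h0, hx0]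
    · have := hmono 0 j h0 hj; rw [hx0] at this; linarith
  have hle1 : ∀ j, j ≤ n → xb j ≤ 1 := by
    intro j hj
    rcases eq_or_lt_of_le hj with h0 | h0
    · rw [h0, hxn]
    · have := hmono j n h0 le_rfl; rw [hxn] at this; linarith
  -- interval bound: 1/n ≤ C/p * (xb i ^ p - xb (i-1) ^ p)
  have key : ∀ i, 1 ≤ i → i ≤ n →
      (1:ℝ)/n ≤ C / p * (xb i ^ p - xb (i-1) ^ p) := by
    intro i h1 h2
    have hi1 : i - 1 < i := Nat.sub_lt (by omega) one_pos
    have hlt : xb (i-1) < xb i := hmono _ _ hi1 h2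
    have hu0 : 0 ≤ xb (i-1) := hnonneg _ (by omega)
    have hv1 : xb i ≤ 1 := hle1 _ h2
    have hval := hint i h1 h2
    have hρint : IntervalIntegrable ρ volume (xb (i-1)) (xb i) := by
      by_contra h
      rw [intervalIntegral.integral_undef h] at hval
      have h' : (0:ℝ) < 1 / n := by positivity
      rw [← hval] at h'; exact lt_irrefl _ h'
    have hgint : IntervalIntegrable (fun x => C * x ^ r) volume (xb (i-1)) (xb i) :=
      (intervalIntegrable_rpow' hr1).const_mul C
    have hmae : ρ ≤ᵐ[volume.restrict (Set.Icc (xb (i-1)) (xb i))]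
        (fun x => C * x ^ r) := by
      have hmz : volume ({0, 1} : Set ℝ) = 0 :=
        (((Set.finite_singleton (1:ℝ)).insert 0).countable).measure_zero volume
      have h01 : ∀ᵐ x : ℝ, x ∉ ({0, 1} : Set ℝ) :=
        measure_eq_zero_iff_ae_notMem.mp hmz
      have h01' := ae_restrict_of_ae (μ := volume)
        (s := Set.Icc (xb (i-1)) (xb i)) h01
      have hmem : ∀ᵐ x ∂(volume.restrict (Set.Icc (xb (i-1)) (xb i))),
          x ∈ Set.Icc (xb (i-1)) (xb i) :=
        ae_restrict_mem measurableSet_Icc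
      filter_upwards [h01', hmem] with x hx hxmem
      simp only [Set.mem_insert_iff, Set.mem_singleton_iff, not_or] at hx
      have hx0' : 0 < x := lt_of_le_of_ne (hu0.trans hxmem.1) (Ne.symm hx.1)
      have hx1' : x < 1 := lt_of_le_of_ne (hxmem.2.trans hv1) hx.2
      exact hρle x ⟨hx0', hx1'⟩
    have hmono' := intervalIntegral.integral_mono_ae_restrict hlt.le hρint hgint hmae
    rw [hval] at hmono'
    have hcalc : (∫ x in (xb (i-1))..(xb i), C * x ^ r)
        = C / p * (xb i ^ p - xb (i-1) ^ p) := by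
      rw [intervalIntegral.integral_const_mul, integral_rpow (Or.inl hr1), hrp]
      ring
    rw [hcalc] at hmono'
    exact hmono'
  -- cumulative bound: i/n ≤ C/p * xb i ^ p
  have cum : ∀ i, i ≤ n → (i:ℝ)/n ≤ C / p * (xb i ^ p) := by
    intro i
    induction i with
    | zero =>
      intro _
      rw [hx0, Real.zero_rpow hp0.ne']
      simp
    | succ k ih =>
      intro hk
      have h1 := ih (by omega)
      have h2 := key (k+1) (by omega) hk
      have hsub : (k+1) - 1 = k := by omega
      rw [hsub] at h2
      push_cast
      have heq : ((k:ℝ)+1)/n = (k:ℝ)/n + 1/n := by ring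
      rw [heq]
      nlinarith [h1, h2]
  -- lower bound on xb i
  have hxlb : ∀ i, i ≤ n → ((i:ℝ) * p / (n * C)) ^ q ≤ xb i := by
    intro i hi
    have h1 := cum i hi
    have hxp : (i:ℝ) * p / (n * C) ≤ xb i ^ p := by
      have h2 := mul_le_mul_of_nonneg_right h1 (le_of_lt (div_pos hp0 hC))
      have heq : C / p * xb i ^ p * (p / C) = xb i ^ p := by
        field_simp
      calc (i:ℝ) * p / (n * C) = (i:ℝ)/n * (p/C) := by ring
        _ ≤ C / p * xb i ^ p * (p / C) := h2
        _ = xb i ^ p := heq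
    have hb0 : (0:ℝ) ≤ (i:ℝ) * p / (n * C) := by positivity
    calc ((i:ℝ) * p / (n * C)) ^ q ≤ (xb i ^ p) ^ q :=
          Real.rpow_le_rpow hb0 hxp (by linarith)
      _ = xb i ^ (p * q) := by
          rw [← Real.rpow_mul (hnonneg i hi)]
      _ = xb i := by rw [hpq, Real.rpow_one]
  constructor
  · -- first interval
    have h1 := hxlb 1 hn
    have hEq : ((1:ℕ):ℝ) * p / ((n:ℝ) * C) = (p / C) * ((n:ℝ))⁻¹ := by
      push_cast
      rw [one_mul, div_mul_eq_div_div_swap, div_eq_mul_inv]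
    have h2 : ((p / C) * ((n:ℝ))⁻¹) ^ q ≤ xb 1 := by rw [← hEq]; exact h1
    have h3 : ((p / C) * ((n:ℝ))⁻¹) ^ q = (p / C) ^ q * (n:ℝ) ^ (-2/(1+a)) := by
      rw [Real.mul_rpow (by positivity) (by positivity)]
      congr 1
      rw [Real.inv_rpow hn0.le, ← Real.rpow_neg hn0.le]
      congr 1
      rw [hqdef]; ring
    rw [hx0, sub_zero, ge_iff_le]
    calc min ((p / C) ^ q) ((p / C) ^ β / C) * (n:ℝ) ^ (-2/(1+a))
        ≤ (p / C) ^ q * (n:ℝ) ^ (-2/(1+a)) := by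
          apply mul_le_mul_of_nonneg_right (min_le_left _ _) (by positivity)
      _ = ((p / C) * ((n:ℝ))⁻¹) ^ q := h3.symm
      _ ≤ xb 1 := h2
  · -- general interval
    intro i h2i hin2
    have hin : i ≤ n := by omega
    have hi1n : i - 1 ≤ n := by omega
    have hlt : xb (i-1) < xb i := hmono _ _ (Nat.sub_lt (by omega) one_pos) hin
    have hu0 : 0 < xb (i-1) := by
      have := hmono 0 (i-1) (by omega) hi1n
      rw [hx0] at this; exact this
    have hv0 : 0 < xb i := hu0.trans hlt
    obtain ⟨u1, hu1def⟩ : ∃ t : ℝ, t = (xb (i-1)) ^ (1 - p) := ⟨_, rfl⟩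
    have hup : 0 < u1 := hu1def ▸ Real.rpow_pos_of_pos hu0 _
    have hconv : q * u1 * ((xb i) ^ p - (xb (i-1)) ^ p) ≤ xb i - xb (i-1) := by
      have ht : 0 < (xb (i-1)) ^ p := Real.rpow_pos_of_pos hu0 p
      have hts : (xb (i-1)) ^ p ≤ (xb i) ^ p :=
        Real.rpow_le_rpow hu0.le hlt.le hp0.le
      have hb := stmt4_bern hq1 ht hts
      have e1 : ((xb (i-1)) ^ p) ^ (q - 1) = u1 := by
        rw [← Real.rpow_mul hu0.le, hu1def]
        congr 1
        rw [mul_sub, hpq, mul_one]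
      have e2 : ((xb i) ^ p) ^ q = xb i := by
        rw [← Real.rpow_mul hv0.le, hpq, Real.rpow_one]
      have e3 : ((xb (i-1)) ^ p) ^ q = xb (i-1) := by
        rw [← Real.rpow_mul hu0.le, hpq, Real.rpow_one]
      rw [e1, e2, e3] at hb
      linarith
    have hkey := key i (by omega) hin
    have hq0 : 0 < q := by linarith
    have hstep : (1:ℝ)/n ≤ C * (xb i - xb (i-1)) / u1 := by
      have h1 : (xb i) ^ p - (xb (i-1)) ^ p
          ≤ (xb i - xb (i-1)) / (q * u1) := by
        rw [le_div_iff₀ (by positivity)]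
        nlinarith [hconv]
      have heq : C / p * ((xb i - xb (i-1)) / (q * u1))
          = C * (xb i - xb (i-1)) / u1 := by
        have hqu : p * (q * u1) = u1 := by rw [← mul_assoc, hpq, one_mul]
        calc C / p * ((xb i - xb (i-1)) / (q * u1))
            = C * (xb i - xb (i-1)) / (p * (q * u1)) := by ring
          _ = C * (xb i - xb (i-1)) / u1 := by rw [hqu]
      calc (1:ℝ)/n ≤ C / p * ((xb i) ^ p - (xb (i-1)) ^ p) := hkey
        _ ≤ C / p * ((xb i - xb (i-1)) / (q * u1)) :=
            mul_le_mul_of_nonneg_left h1 (by positivity)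
        _ = C * (xb i - xb (i-1)) / u1 := heq
    have hℓ : u1 / (n * C) ≤ xb i - xb (i-1) := by
      rw [div_le_div_iff₀ hn0 hup] at hstep
      rw [div_le_iff₀ (by positivity)]
      nlinarith [hstep]
    -- lower bound on u1
    have hicast : ((i-1 : ℕ) : ℝ) = (i:ℝ) - 1 := by
      rw [Nat.cast_sub (by omega : 1 ≤ i), Nat.cast_one]
    have hi1pos : (0:ℝ) < (i:ℝ) - 1 := by
      have : (2:ℝ) ≤ (i:ℝ) := by exact_mod_cast h2i
      linarith
    have hxlb'' : (((i:ℝ)-1) * p / (n * C)) ^ q ≤ xb (i-1) := by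
      rw [← hicast]; exact hxlb (i-1) hi1n
    have hub : (((i:ℝ)-1) * p / (n * C)) ^ (q * (1-p)) ≤ u1 := by
      have h1 : ((((i:ℝ)-1) * p / (n * C)) ^ q) ^ (1-p) ≤ u1 := by
        rw [hu1def]
        exact Real.rpow_le_rpow (by positivity) hxlb'' (by linarith)
      rwa [← Real.rpow_mul (by positivity)] at h1
    have hsplit : (((i:ℝ)-1) * p / (n * C)) ^ (q * (1-p))
        = (((i:ℝ)-1)/n) ^ β * (p / C) ^ β := by
      rw [← hβ, show ((i:ℝ)-1) * p / ((n:ℝ) * C) = (((i:ℝ)-1)/n) * (p / C) from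
        (div_mul_div_comm _ _ _ _).symm]
      exact Real.mul_rpow (by positivity) (by positivity)
    rw [ge_iff_le, ← hβdef]
    calc min ((p / C) ^ q) ((p / C) ^ β / C) / n * (((i:ℝ)-1)/n) ^ β
        ≤ (p / C) ^ β / C / n * (((i:ℝ)-1)/n) ^ β := by
          apply mul_le_mul_of_nonneg_right _ (by positivity)
          apply div_le_div_of_nonneg_right (min_le_right _ _) (by positivity)
      _ = ((((i:ℝ)-1)/n) ^ β * (p / C) ^ β) / (n * C) := by ring
      _ = (((i:ℝ)-1) * p / (n * C)) ^ (q * (1-p)) / (n * C) := by rw [hsplit]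
      _ ≤ u1 / (n * C) := by
          apply div_le_div_of_nonneg_right hub (by positivity)
      _ ≤ xb i - xb (i-1) := hℓ
end

section
/- Let U : ℝ → [0,∞) be convex and finite on [0,1], let 0 = x̄₀ < ... < x̄ₙ = 1, let ρ̄ be a probability density supported on [0,1] with ∫_{x̄_{i-1}}^{x̄_i} ρ̄ = 1/n for each i, and let φ̄ be the piecewise constant density equal to (1/n)/(x̄_i - x̄_{i-1}) on (x̄_{i-1}, x̄_i). Then ∫₀¹ U (φ̄ - ρ̄) dx ≤ (U(0) + U(1))/n. -/
/-!
Let `t` minimise `U` on `[0, 1]`. Convexity makes `U` antitone on `[0, t]` and monotone on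
`[t, 1]`, so `U = N + P - U t` with `N x = U (min x t)` antitone and `P x = U (max x t)`
monotone on `[0, 1]`. On a cell `[a, b]` both densities have mass `1/n`, hence `∫ U (φ̄ - ρ̄)`
over the cell is at most `1/n` times the oscillation of `U` there, which is at most
`(N a - N b) + (P b - P a)`.
Summing over the cells telescopes to `(U 0 - U t) + (U 1 - U t) ≤ U 0 + U 1`.
-/

open MeasureTheory Set intervalIntegral

section ConvexMinimizer

variable {U : ℝ → ℝ} {a b t : ℝ}

lemma ConvexOn.antitoneOn_Icc_of_isMinOn (hU : ConvexOn ℝ (Icc a b) U)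
    (hmin : IsMinOn U (Icc a b) t) (ht : t ∈ Icc a b) : AntitoneOn U (Icc a t) := by
  intro x hx y hy hxy
  have hxs : x ∈ Icc a b := ⟨hx.1, hx.2.trans ht.2⟩
  have hseg : y ∈ segment ℝ x t := segment_eq_Icc (hxy.trans hy.2) ▸ ⟨hxy, hy.2⟩
  exact (hU.le_on_segment hxs ht hseg).trans (max_le le_rfl (hmin hxs))

lemma ConvexOn.monotoneOn_Icc_of_isMinOn (hU : ConvexOn ℝ (Icc a b) U)
    (hmin : IsMinOn U (Icc a b) t) (ht : t ∈ Icc a b) : MonotoneOn U (Icc t b) := by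
  intro x hx y hy hxy
  have hys : y ∈ Icc a b := ⟨ht.1.trans hy.1, hy.2⟩
  have hseg : x ∈ segment ℝ t y := segment_eq_Icc (hx.1.trans hxy) ▸ ⟨hx.1, hxy⟩
  exact (hU.le_on_segment ht hys hseg).trans (max_le (hmin hys) le_rfl)

lemma ConvexOn.antitoneOn_comp_min_of_isMinOn (hU : ConvexOn ℝ (Icc a b) U)
    (hmin : IsMinOn U (Icc a b) t) (ht : t ∈ Icc a b) :
    AntitoneOn (fun x => U (min x t)) (Icc a b) := fun x hx y hy hxy =>
  hU.antitoneOn_Icc_of_isMinOn hmin ht ⟨le_min hx.1 ht.1, min_le_right x t⟩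
    ⟨le_min hy.1 ht.1, min_le_right y t⟩ (min_le_min_right t hxy)

lemma ConvexOn.monotoneOn_comp_max_of_isMinOn (hU : ConvexOn ℝ (Icc a b) U)
    (hmin : IsMinOn U (Icc a b) t) (ht : t ∈ Icc a b) :
    MonotoneOn (fun x => U (max x t)) (Icc a b) := fun x hx y hy hxy =>
  hU.monotoneOn_Icc_of_isMinOn hmin ht ⟨le_max_right x t, max_le hx.2 ht.2⟩
    ⟨le_max_right y t, max_le hy.2 ht.2⟩ (max_le_max_right t hxy)

lemma apply_min_add_apply_max {α β : Type*} [LinearOrder α] [AddCommMagma β] (f : α → β)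
    (x t : α) : f (min x t) + f (max x t) = f x + f t := by
  rcases le_total x t with h | h <;> simp [h, add_comm]

lemma AntitoneOn.add_monotoneOn_mem_Icc {α : Type*} [Preorder α] {g h : α → ℝ} {s : Set α}
    {a b x : α} (hg : AntitoneOn g s) (hh : MonotoneOn h s) (ha : a ∈ s) (hb : b ∈ s)
    (hx : x ∈ s) (hax : a ≤ x) (hxb : x ≤ b) :
    g b + h a ≤ g x + h x ∧ g x + h x ≤ g a + h b :=
  ⟨add_le_add (hg hx hb hxb) (hh ha hx hax), add_le_add (hg ha hx hax) (hh hx hb hxb)⟩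

lemma ConvexOn.bounds_on_Icc_of_isMinOn {c d x : ℝ} (hU : ConvexOn ℝ (Icc c d) U)
    (hmin : IsMinOn U (Icc c d) t) (ht : t ∈ Icc c d) (hca : c ≤ a) (hbd : b ≤ d)
    (hx : x ∈ Icc a b) :
    U (min b t) + U (max a t) - U t ≤ U x ∧
      U x ≤ U (min b t) + U (max a t) - U t +
        ((U (min a t) - U (min b t)) + (U (max b t) - U (max a t))) := by
  have hsub : Icc a b ⊆ Icc c d := Icc_subset_Icc hca hbd
  have hsandwich := (hU.antitoneOn_comp_min_of_isMinOn hmin ht).add_monotoneOn_mem_Icc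
    (hU.monotoneOn_comp_max_of_isMinOn hmin ht) (hsub ⟨le_rfl, hx.1.trans hx.2⟩)
    (hsub ⟨hx.1.trans hx.2, le_rfl⟩) (hsub hx) hx.1 hx.2
  have hdecomp := apply_min_add_apply_max U x t
  constructor <;> linarith [hsandwich.1, hsandwich.2]

end ConvexMinimizer

lemma mem_Icc_of_strictMono_partition {xb : ℕ → ℝ} {n i : ℕ} (h0 : xb 0 = 0) (h1 : xb n = 1)
    (hmono : ∀ i j, i < j → j ≤ n → xb i < xb j) (hi : i ≤ n) :
    xb i ∈ Icc (0:ℝ) 1 := by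
  constructor
  · rcases i.eq_zero_or_pos with rfl | hpos
    · exact h0.ge
    · exact h0 ▸ (hmono 0 i hpos hi).le
  · rcases hi.eq_or_lt with rfl | hlt
    · exact h1.le
    · exact h1 ▸ (hmono i n hlt le_rfl).le

section CellIntegral

variable {U f g φ ρ : ℝ → ℝ} {a b m L D : ℝ}

lemma integral_mul_sub_le_of_bounds (hab : a ≤ b) (hU : ContinuousOn U (Icc a b))
    (hbd : ∀ x ∈ Icc a b, L ≤ U x ∧ U x ≤ L + D)
    (hf : IntervalIntegrable f volume a b) (hg : IntervalIntegrable g volume a b)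
    (hf0 : ∀ x ∈ Icc a b, 0 ≤ f x) (hg0 : ∀ x ∈ Icc a b, 0 ≤ g x)
    (hfg : ∫ x in a..b, f x = ∫ x in a..b, g x) :
    ∫ x in a..b, U x * (f x - g x) ≤ D * ∫ x in a..b, f x := by
  rw [← uIcc_of_le hab] at hU
  have hUf := hf.continuousOn_mul hU
  have hUg := hg.continuousOn_mul hU
  have upper : ∫ x in a..b, U x * f x ≤ ∫ x in a..b, (L + D) * f x :=
    integral_mono_on hab hUf (hf.const_mul _) fun x hx =>
      mul_le_mul_of_nonneg_right (hbd x hx).2 (hf0 x hx)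
  have lower : ∫ x in a..b, L * g x ≤ ∫ x in a..b, U x * g x :=
    integral_mono_on hab (hg.const_mul _) hUg fun x hx =>
      mul_le_mul_of_nonneg_right (hbd x hx).1 (hg0 x hx)
  simp only [mul_sub]
  rw [integral_sub hUf hUg]
  rw [intervalIntegral.integral_const_mul, add_mul] at upper
  rw [intervalIntegral.integral_const_mul, ← hfg] at lower
  linarith

lemma integral_mul_uniform_sub_le (hab : a < b) (hU : ContinuousOn U (Icc a b))
    (hbd : ∀ x ∈ Icc a b, L ≤ U x ∧ U x ≤ L + D)
    (hφ : ∀ x ∈ Ioo a b, φ x = m / (b - a))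
    (hρ : IntervalIntegrable ρ volume a b) (hρ0 : ∀ x ∈ Icc a b, 0 ≤ ρ x)
    (hρm : ∫ x in a..b, ρ x = m) :
    IntervalIntegrable (fun x => U x * (φ x - ρ x)) volume a b ∧
      ∫ x in a..b, U x * (φ x - ρ x) ≤ D * m := by
  have hm : 0 ≤ m := hρm ▸ integral_nonneg hab.le hρ0
  have heq : EqOn (fun x => U x * (m / (b - a) - ρ x)) (fun x => U x * (φ x - ρ x))
      (uIoo a b) := by
    rw [uIoo_of_le hab.le]
    intro x hx
    simp only [hφ x hx]
  have hmass : ∫ _ in a..b, m / (b - a) = m := by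
    rw [intervalIntegral.integral_const, smul_eq_mul, mul_div_cancel₀ m (sub_pos.mpr hab).ne']
  have hint : IntervalIntegrable (fun x => U x * (m / (b - a) - ρ x)) volume a b :=
    (intervalIntegrable_const.sub hρ).continuousOn_mul (by rwa [uIcc_of_le hab.le])
  refine ⟨hint.congr_uIoo heq, ?_⟩
  rw [← integral_congr_uIoo heq]
  simpa only [hmass] using integral_mul_sub_le_of_bounds hab.le hU hbd intervalIntegrable_const hρ
    (fun _ _ => by positivity) hρ0 (hmass.trans hρm.symm)

end CellIntegral

theorem stmt7_general (U : ℝ → ℝ) (hU : ConvexOn ℝ Set.univ U) (hU0 : ∀ x, 0 ≤ U x)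
    (n : ℕ) (xb : ℕ → ℝ) (ρ φ : ℝ → ℝ)
    (h0 : xb 0 = 0) (h1 : xb n = 1)
    (hmono : ∀ i j, i < j → j ≤ n → xb i < xb j)
    (hρ0 : ∀ x, 0 ≤ ρ x)
    (hρint : MeasureTheory.IntegrableOn ρ (Set.Icc (0:ℝ) 1))
    (hcell : ∀ i, 1 ≤ i → i ≤ n → ∫ x in (xb (i-1))..(xb i), ρ x = 1/(n:ℝ))
    (hφ : ∀ i, 1 ≤ i → i ≤ n → ∀ x ∈ Set.Ioo (xb (i-1)) (xb i),
        φ x = (1/(n:ℝ)) / (xb i - xb (i-1))) :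
    (∫ x in (0:ℝ)..1, U x * (φ x - ρ x)) ≤ (U 0 + U 1)/n := by
  have hUc : Continuous U := continuousOn_univ.mp (hU.continuousOn isOpen_univ)
  obtain ⟨t, ht, htmin⟩ :=
    isCompact_Icc.exists_isMinOn (nonempty_Icc.mpr zero_le_one) hUc.continuousOn
  have hU01 : ConvexOn ℝ (Icc 0 1) U := hU.subset (subset_univ _) (convex_Icc 0 1)
  set N : ℝ → ℝ := fun x => U (min x t)
  set P : ℝ → ℝ := fun x => U (max x t)
  have hxb i (hi : i ≤ n) := mem_Icc_of_strictMono_partition h0 h1 hmono hi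
  have hcells : ∀ i < n,
      IntervalIntegrable (fun x => U x * (φ x - ρ x)) volume (xb i) (xb (i+1)) ∧
      ∫ x in xb i..xb (i+1), U x * (φ x - ρ x)
        ≤ ((N (xb i) - N (xb (i+1))) + (P (xb (i+1)) - P (xb i))) * (1 / n) := fun i hi => by
    have hab := hmono i (i+1) i.lt_succ_self hi
    have hsub : uIcc (xb i) (xb (i+1)) ⊆ Icc 0 1 := by
      rw [uIcc_of_le hab.le]; exact Icc_subset_Icc (hxb i hi.le).1 (hxb (i+1) hi).2
    exact integral_mul_uniform_sub_le hab hUc.continuousOn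
      (fun x => hU01.bounds_on_Icc_of_isMinOn htmin ht (hxb i hi.le).1 (hxb (i+1) hi).2)
      (by simpa using hφ (i+1) (by omega) hi) (hρint.mono_set hsub).intervalIntegrable
      (fun x _ => hρ0 x) (by simpa using hcell (i+1) (by omega) hi)
  have hsum := sum_integral_adjacent_intervals fun i hi => (hcells i hi).1
  rw [h0, h1] at hsum
  rw [← hsum]
  calc ∑ i ∈ Finset.range n, ∫ x in xb i..xb (i+1), U x * (φ x - ρ x)
      ≤ ∑ i ∈ Finset.range n,
          ((N (xb i) - N (xb (i+1))) + (P (xb (i+1)) - P (xb i))) * (1 / n) :=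
        Finset.sum_le_sum fun i hi => (hcells i (Finset.mem_range.mp hi)).2
    _ = ((U 0 - U t) + (U 1 - U t)) / n := by
        rw [← Finset.sum_mul, Finset.sum_add_distrib, Finset.sum_range_sub',
          Finset.sum_range_sub (fun i => P (xb i)), h0, h1]
        simp only [N, P, min_eq_left ht.1, min_eq_right ht.2, max_eq_right ht.1, max_eq_left ht.2]
        ring
    _ ≤ (U 0 + U 1) / n := by
        gcongr ?_ / _
        linarith [hU0 t]

theorem stmt7 (U : ℝ → ℝ) (hU : ConvexOn ℝ Set.univ U) (hU0 : ∀ x, 0 ≤ U x)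
    (n : ℕ) (hn : 1 ≤ n) (xb : ℕ → ℝ) (ρ φ : ℝ → ℝ)
    (h0 : xb 0 = 0) (h1 : xb n = 1)
    (hmono : ∀ i j, i < j → j ≤ n → xb i < xb j)
    (hρ0 : ∀ x, 0 ≤ ρ x) (hρsupp : ∀ x, x ∉ Set.Icc (0:ℝ) 1 → ρ x = 0)
    (hρint : MeasureTheory.IntegrableOn ρ (Set.Icc (0:ℝ) 1))
    (hcell : ∀ i, 1 ≤ i → i ≤ n → ∫ x in (xb (i-1))..(xb i), ρ x = 1/(n:ℝ))
    (hφ : ∀ i, 1 ≤ i → i ≤ n → ∀ x ∈ Set.Ioo (xb (i-1)) (xb i),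
        φ x = (1/(n:ℝ)) / (xb i - xb (i-1))) :
    (∫ x in (0:ℝ)..1, U x * (φ x - ρ x)) ≤ (U 0 + U 1)/n :=
  stmt7_general U hU hU0 n xb ρ φ h0 h1 hmono hρ0 hρint hcell hφ
end

section
/- Let V : ℝ → [0,∞) be even and non-increasing on (0,∞), and let x₀ < x₁ < ... < xₙ be real numbers. Then the sum T₇ := (2/n²) ∑_{i=3}^{n} ∑_{j=1}^{i-2} ( V(x_{i-1} - x_j) - V(x_i - x_{j-1}) ) satisfies T₇ ≤ (4/n²) ∑_{i=2}^{n-1} V(x_i - x_{i-1}). -/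
/-!
Write `g j i = V (x i - x j)`. Each term compares the pair `(j, i-1)` with the wider pair
`(j-1, i)`. Shifting `i` in the positive part and `j` in the negative part and regrouping by the
right endpoint `i`, the terms `g j i` with `1 ≤ j ≤ i-3` cancel, so row `i` contributes
`g (i-1) i + g (i-2) i - g 0 i ≤ 2 g (i-1) i`, using that `V` is nonnegative and non-increasing
on `(0, ∞)`. In the induction over rows the cancellation is done by carrying the partial row
`∑_{1 ≤ j ≤ i-2} g j i`, which is nonnegative and is dropped at the end.
-/

open Finset

theorem sum_Icc_eq_sum_range {M : Type*} [AddCommMonoid M] (f : ℕ → M) (a b : ℕ) :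
    ∑ i ∈ Icc a b, f i = ∑ k ∈ range (b + 1 - a), f (k + a) := by
  rw [← Ico_add_one_right_eq_Icc, sum_Ico_eq_sum_range]
  simp_rw [add_comm a]

section NearestNeighbour

variable (g : ℕ → ℕ → ℝ)

theorem sum_range_widening_diff_add_row_le (hg : ∀ i j, 0 ≤ g i j) (N : ℕ)
    (hnext : ∀ m < N, g (m + 1) (m + 3) ≤ g (m + 1) (m + 2)) :
    ∑ k ∈ range N, ∑ l ∈ range (k + 1), (g (l + 1) (k + 2) - g l (k + 3))
        + ∑ l ∈ range N, g (l + 1) (N + 2)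
      ≤ 2 * ∑ k ∈ range N, g (k + 1) (k + 2) := by
  induction N with
  | zero => simp
  | succ N ih =>
    have hrow : ∑ l ∈ range (N + 1), (g (l + 1) (N + 2) - g l (N + 3))
        = ∑ l ∈ range N, g (l + 1) (N + 2) + g (N + 1) (N + 2)
          - g 0 (N + 3) - ∑ l ∈ range N, g (l + 1) (N + 3) := by
      rw [sum_sub_distrib, sum_range_succ, sum_range_succ']
      ring
    rw [sum_range_succ _ N, hrow, sum_range_succ, sum_range_succ _ N]
    linarith [ih fun m hm => hnext m (by omega), hnext N (by omega), hg 0 (N + 3)]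

theorem sum_range_widening_diff_le (hg : ∀ i j, 0 ≤ g i j) (N : ℕ)
    (hnext : ∀ m < N, g (m + 1) (m + 3) ≤ g (m + 1) (m + 2)) :
    ∑ k ∈ range N, ∑ l ∈ range (k + 1), (g (l + 1) (k + 2) - g l (k + 3))
      ≤ 2 * ∑ k ∈ range N, g (k + 1) (k + 2) := by
  have hrow : 0 ≤ ∑ l ∈ range N, g (l + 1) (N + 2) := sum_nonneg fun _ _ => hg _ _
  linarith [sum_range_widening_diff_add_row_le g hg N hnext]

theorem sum_Icc_widening_diff_le (hg : ∀ i j, 0 ≤ g i j) (n : ℕ)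
    (hnext : ∀ i, 3 ≤ i → i ≤ n → g (i - 2) i ≤ g (i - 2) (i - 1)) :
    ∑ i ∈ Icc 3 n, ∑ j ∈ Icc 1 (i - 2), (g j (i - 1) - g (j - 1) i)
      ≤ 2 * ∑ i ∈ Icc 2 (n - 1), g (i - 1) i := by
  have hlen : n - 1 + 1 - 2 = n - 2 := by omega
  have hout : n + 1 - 3 = n - 2 := by omega
  have hnext' : ∀ m < n - 2, g (m + 1) (m + 3) ≤ g (m + 1) (m + 2) := fun m hm =>
    hnext (m + 3) (by omega) (by omega)
  simpa [sum_Icc_eq_sum_range, hlen, hout] using sum_range_widening_diff_le g hg (n - 2) hnext'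

end NearestNeighbour

theorem stmt8_general (V : ℝ → ℝ) (hV0 : ∀ x, 0 ≤ V x)
    (hanti : AntitoneOn V (Set.Ioi (0:ℝ)))
    (n : ℕ) (x : ℕ → ℝ)
    (hmono : ∀ i j, i < j → j ≤ n → x i < x j) :
    (2/(n:ℝ)^2) * ∑ i ∈ Finset.Icc 3 n, ∑ j ∈ Finset.Icc 1 (i-2),
        (V (x (i-1) - x j) - V (x i - x (j-1)))
      ≤ (4/(n:ℝ)^2) * ∑ i ∈ Finset.Icc 2 (n-1), V (x i - x (i-1)) := by
  have hnext : ∀ i, 3 ≤ i → i ≤ n → V (x i - x (i - 2)) ≤ V (x (i - 1) - x (i - 2)) := by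
    intro i hi3 hin
    have hgap : 0 < x (i - 1) - x (i - 2) := sub_pos.2 (hmono _ _ (by omega) (by omega))
    have hlast : x (i - 1) < x i := hmono _ _ (by omega) hin
    exact hanti hgap (hgap.trans (by linarith)) (by linarith)
  have key := sum_Icc_widening_diff_le (fun j i => V (x i - x j)) (fun _ _ => hV0 _) n hnext
  calc _ ≤ (2/(n:ℝ)^2) * (2 * ∑ i ∈ Icc 2 (n-1), V (x i - x (i-1))) := by gcongr
    _ = _ := by ring

theorem stmt8 (V : ℝ → ℝ) (hV0 : ∀ x, 0 ≤ V x) (heven : ∀ x, V (-x) = V x)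
    (hanti : AntitoneOn V (Set.Ioi (0:ℝ)))
    (n : ℕ) (hn : 1 ≤ n) (x : ℕ → ℝ)
    (hmono : ∀ i j, i < j → j ≤ n → x i < x j) :
    (2/(n:ℝ)^2) * ∑ i ∈ Finset.Icc 3 n, ∑ j ∈ Finset.Icc 1 (i-2),
        (V (x (i-1) - x j) - V (x i - x (j-1)))
      ≤ (4/(n:ℝ)^2) * ∑ i ∈ Finset.Icc 2 (n-1), V (x i - x (i-1)) :=
  stmt8_general V hV0 hanti n x hmono
end

section
/- Let 0 < a < 1, let ρ̄ be a probability density on [0,1] with ρ̄(y) ≤ C y^{-(1-a)/2}, and let W_n : ℝ → [0,∞) be even, supported in [-1/n,1/n], with W_n(r) ≤ C'|r|^{-a}. Then for all 2/n ≤ x ≤ 1/2, (W_n * ρ̄)(x) ≤ C'' n^{-1+a} (x - 1/n)^{-(1-a)/2}. -/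
/-!
On the support of `Wn (x - ·)` the variable `y` stays in `[x - 1/n, x + 1/n] ⊆ (0, 1)`, where the
density bound `ρ y ≤ C y^{-(1-a)/2}` is at most `C (x - 1/n)^{-(1-a)/2}` because the exponent is
negative. What remains is the mass of the kernel, `∫_{-1/n}^{1/n} C' |r|^{-a} dr = 2 C' n^{-1+a}/(1-a)`.
-/

open MeasureTheory Set

lemma intervalIntegrable_abs_rpow_zero_right {r : ℝ} (hr : -1 < r) {h : ℝ} (hh : 0 ≤ h) :
    IntervalIntegrable (fun u : ℝ => |u| ^ r) volume 0 h :=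
  (intervalIntegral.intervalIntegrable_rpow' hr).congr_uIoo fun u hu => by
    rw [uIoo_of_le hh] at hu
    simp only [abs_of_pos hu.1]

lemma intervalIntegrable_abs_rpow_neg_zero {r : ℝ} (hr : -1 < r) {h : ℝ} (hh : 0 ≤ h) :
    IntervalIntegrable (fun u : ℝ => |u| ^ r) volume (-h) 0 := by
  simpa only [abs_neg, neg_zero] using
    ((IntervalIntegrable.iff_comp_neg).mp (intervalIntegrable_abs_rpow_zero_right hr hh)).symm

lemma intervalIntegral_abs_rpow_zero_right {r : ℝ} (hr : -1 < r) {h : ℝ} (hh : 0 ≤ h) :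
    ∫ u in (0 : ℝ)..h, |u| ^ r = h ^ (r + 1) / (r + 1) := by
  rw [intervalIntegral.integral_congr (g := fun u => u ^ r) fun u hu => by
    rw [uIcc_of_le hh] at hu
    simp only [abs_of_nonneg hu.1], integral_rpow (Or.inl hr),
    Real.zero_rpow (by linarith), sub_zero]

lemma integrableOn_abs_rpow_Icc {r : ℝ} (hr : -1 < r) {h : ℝ} (hh : 0 ≤ h) :
    IntegrableOn (fun u : ℝ => |u| ^ r) (Icc (-h) h) := by
  rw [integrableOn_Icc_iff_integrableOn_Ioc,
    ← intervalIntegrable_iff_integrableOn_Ioc_of_le (by linarith)]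
  exact (intervalIntegrable_abs_rpow_neg_zero hr hh).trans
    (intervalIntegrable_abs_rpow_zero_right hr hh)

lemma integral_abs_rpow_Icc {r : ℝ} (hr : -1 < r) {h : ℝ} (hh : 0 ≤ h) :
    ∫ u in Icc (-h) h, |u| ^ r = 2 * h ^ (r + 1) / (r + 1) := by
  have hsymm : ∫ u in (-h)..0, |u| ^ r = ∫ u in (0 : ℝ)..h, |u| ^ r := by
    simpa only [abs_neg, neg_zero] using
      (intervalIntegral.integral_comp_neg (fun u : ℝ => |u| ^ r) (a := 0) (b := h)).symm
  rw [integral_Icc_eq_integral_Ioc, ← intervalIntegral.integral_of_le (by linarith),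
    ← intervalIntegral.integral_add_adjacent_intervals (intervalIntegrable_abs_rpow_neg_zero hr hh)
      (intervalIntegrable_abs_rpow_zero_right hr hh), hsymm,
    intervalIntegral_abs_rpow_zero_right hr hh]
  ring

theorem integral_kernel_mul_le {W f : ℝ → ℝ} {a h A B x : ℝ} (ha : a < 1) (hh : 0 ≤ h)
    (hA : 0 ≤ A) (hW0 : ∀ r, 0 ≤ W r) (hW_supp : Function.support W ⊆ Icc (-h) h)
    (hW : ∀ r, r ≠ 0 → W r ≤ A * |r| ^ (-a)) (hf0 : ∀ y, 0 ≤ f y)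
    (hf : ∀ y ∈ Icc (x - h) (x + h), f y ≤ B) :
    ∫ y, W (x - y) * f y ≤ A * B * (2 * h ^ (1 - a) / (1 - a)) := by
  set k : ℝ → ℝ := (Icc (-h) h).indicator fun r => A * B * |r| ^ (-a)
  have hk : Integrable k := by
    rw [integrable_indicator_iff measurableSet_Icc]
    exact (integrableOn_abs_rpow_Icc (by linarith) hh).const_mul _
  have hk_int : ∫ r, k r = A * B * (2 * h ^ (1 - a) / (1 - a)) := by
    rw [integral_indicator measurableSet_Icc, integral_const_mul,
      integral_abs_rpow_Icc (by linarith) hh, neg_add_eq_sub]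
  have hpt : ∀ y, x - y ≠ 0 → W (x - y) * f y ≤ k (x - y) := by
    intro y hy
    by_cases hmem : x - y ∈ Icc (-h) h
    · have hyB : f y ≤ B := hf y ⟨by linarith [hmem.2], by linarith [hmem.1]⟩
      simp only [k, indicator_of_mem hmem]
      rw [mul_right_comm]
      exact mul_le_mul (hW _ hy) hyB (hf0 y) (by positivity)
    · simp only [k, indicator_of_notMem hmem,
        Function.notMem_support.mp fun h' => hmem (hW_supp h'), zero_mul, le_refl]
  -- `|0| ^ (-a) = 0` in Lean, so the comparison only holds off the null set `{x}`.
  calc ∫ y, W (x - y) * f y ≤ ∫ y, k (x - y) :=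
        integral_mono_of_nonneg (.of_forall fun y => mul_nonneg (hW0 _) (hf0 y))
          (hk.comp_sub_left x) <|
          (Measure.ae_ne volume x).mono fun y hy => hpt y (sub_ne_zero.mpr hy.symm)
    _ = A * B * (2 * h ^ (1 - a) / (1 - a)) := by rw [integral_sub_left_eq_self, hk_int]

theorem stmt17_general (a C C' : ℝ) (ha1 : a < 1) (hC : 0 < C) (hC' : 0 < C') :
    ∃ C'' > 0, ∀ n : ℕ, 1 ≤ n → ∀ ρ Wn : ℝ → ℝ,
      (∀ y, 0 ≤ ρ y) → (∀ y, y ∉ Set.Icc (0:ℝ) 1 → ρ y = 0) →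
      (∫ y, ρ y) = 1 →
      (∀ y ∈ Set.Ioo (0:ℝ) 1, ρ y ≤ C * y ^ (-(1-a)/2)) →
      (∀ r, Wn (-r) = Wn r) → (∀ r, 0 ≤ Wn r) →
      (Function.support Wn ⊆ Set.Icc (-(1/(n:ℝ))) (1/(n:ℝ))) →
      (∀ r : ℝ, r ≠ 0 → Wn r ≤ C' * |r| ^ (-a)) →
      ∀ x ∈ Set.Icc (2/(n:ℝ)) (1/2),
        (∫ y, Wn (x - y) * ρ y) ≤ C'' * (n:ℝ) ^ (-1+a) * (x - 1/(n:ℝ)) ^ (-(1-a)/2) := by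
  refine ⟨2 * C * C' / (1 - a), by have := sub_pos.mpr ha1; positivity, ?_⟩
  intro n hn ρ Wn hρ0 _ _ hρ _ hW0 hW_supp hW x ⟨hx2, hx1⟩
  have hn0 : (0 : ℝ) < n := by exact_mod_cast hn
  have hh0 : (0 : ℝ) < 1 / n := by positivity
  have hhx : 1 / (n : ℝ) ≤ x / 2 := by linarith [show 2 / (n : ℝ) = 2 * (1 / n) by ring]
  have hρ_near : ∀ y ∈ Icc (x - 1 / n) (x + 1 / n), ρ y ≤ C * (x - 1 / n) ^ (-(1 - a) / 2) := by
    intro y hy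
    exact (hρ y ⟨by linarith [hy.1], by linarith [hy.2]⟩).trans <| mul_le_mul_of_nonneg_left
      (Real.rpow_le_rpow_of_nonpos (by linarith) hy.1 (by linarith)) hC.le
  have hscale : (1 / (n : ℝ)) ^ (1 - a) = (n : ℝ) ^ (-1 + a) := by
    rw [one_div, Real.inv_rpow hn0.le, ← Real.rpow_neg hn0.le, neg_sub, sub_eq_neg_add]
  calc ∫ y, Wn (x - y) * ρ y
      ≤ C' * (C * (x - 1 / n) ^ (-(1 - a) / 2)) * (2 * (1 / (n : ℝ)) ^ (1 - a) / (1 - a)) :=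
        integral_kernel_mul_le ha1 hh0.le hC'.le hW0 hW_supp hW hρ0 hρ_near
    _ = 2 * C * C' / (1 - a) * (n : ℝ) ^ (-1 + a) * (x - 1 / n) ^ (-(1 - a) / 2) := by
        rw [hscale]; ring

theorem stmt17 (a C C' : ℝ) (ha0 : 0 < a) (ha1 : a < 1) (hC : 0 < C) (hC' : 0 < C') :
    ∃ C'' > 0, ∀ n : ℕ, 1 ≤ n → ∀ ρ Wn : ℝ → ℝ,
      (∀ y, 0 ≤ ρ y) → (∀ y, y ∉ Set.Icc (0:ℝ) 1 → ρ y = 0) →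
      (∫ y, ρ y) = 1 →
      (∀ y ∈ Set.Ioo (0:ℝ) 1, ρ y ≤ C * y ^ (-(1-a)/2)) →
      (∀ r, Wn (-r) = Wn r) → (∀ r, 0 ≤ Wn r) →
      (Function.support Wn ⊆ Set.Icc (-(1/(n:ℝ))) (1/(n:ℝ))) →
      (∀ r : ℝ, r ≠ 0 → Wn r ≤ C' * |r| ^ (-a)) →
      ∀ x ∈ Set.Icc (2/(n:ℝ)) (1/2),
        (∫ y, Wn (x - y) * ρ y) ≤ C'' * (n:ℝ) ^ (-1+a) * (x - 1/(n:ℝ)) ^ (-(1-a)/2) :=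
  stmt17_general a C C' ha1 hC hC'
end
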